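/- Let A ⊂ ℝⁿ be a measurable set such that there exist c₁, r₁ > 0 with |B_t(x) ∩ A| ≥ c₁ |B_t(x)| for all x ∈ A and 0 < t ≤ r₁. Fix 0 < r ≤ r₁ and let C ⊂ D ⊂ A be measurable sets and 0 < ε < 1 such that (i) |C| < ε rⁿ |B₁|, and (ii) for all x ∈ A and ρ ∈ (0, r], if |C ∩ B_ρ(x)| ≥ ε |B_ρ(x)| then B_ρ(x) ∩ A ⊂ D. Then |C| ≤ (C(n) ε / c₁) |D| for a dimensional constant C(n). -/

import Mathlib

open MeasureTheory Metric Set Filter Module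
open scoped ENNReal Topology

/-!
For almost every `x ∈ C` (Lebesgue density) the ball `B_ρ(x)` is `ε`-filled by `C` for small `ρ`,
and since `|C| < ε |B_r|` it is not for `ρ = r`. Stopping at a radius `ρ` which is `ε`-filled while
`B_{4ρ}(x)` is not, condition (ii) and the density of `A` give `c₁ |B_ρ(x)| ≤ |D ∩ B_ρ(x)|`, whereas
`|C ∩ B_{4ρ}(x)| ≤ ε 4ⁿ |B_ρ(x)|`. The Vitali covering lemma extracts disjoint balls `B_ρ(x)` whose
fourfold enlargements cover almost all of `C`, and summing gives `|C| ≤ 4ⁿ ε / c₁ |D|`.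
-/

theorem Real.exists_mem_mul_notMem {S : Set ℝ} (hne : S.Nonempty) (hpos : ∀ ρ ∈ S, 0 < ρ)
    (hbdd : BddAbove S) {τ : ℝ} (hτ : 1 < τ) : ∃ ρ ∈ S, τ * ρ ∉ S := by
  obtain ⟨ρ₀, hρ₀⟩ := hne
  have hsup : 0 < sSup S := (hpos ρ₀ hρ₀).trans_le (le_csSup hbdd hρ₀)
  obtain ⟨ρ, hρ, hlt⟩ := exists_lt_of_lt_csSup ⟨ρ₀, hρ₀⟩ (div_lt_self hsup hτ)
  refine ⟨ρ, hρ, fun hmem => (le_csSup hbdd hmem).not_gt ?_⟩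
  rwa [div_lt_iff₀' (by linarith)] at hlt

section Vitali

variable {X : Type*} [MetricSpace X] [SecondCountableTopology X] [MeasurableSpace X]
  [OpensMeasurableSpace X] (μ : Measure X)

theorem measure_le_mul_of_forall_inter_closedBall_le {C D t : Set X} (hD : MeasurableSet D)
    (hCt : μ (C \ t) = 0) {ρ : X → ℝ} {R : ℝ} (hρ : ∀ x ∈ t, 0 < ρ x ∧ ρ x ≤ R) {K : ℝ≥0∞}
    (hK : ∀ x ∈ t, μ (C ∩ closedBall x (4 * ρ x)) ≤ K * μ (D ∩ ball x (ρ x))) :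
    μ C ≤ K * μ D := by
  obtain ⟨u, hut, hdisj, hcov⟩ :=
    Vitali.exists_disjoint_subfamily_covering_enlargement_closedBall t id ρ R
      (fun x hx => (hρ x hx).2) 4 (by norm_num)
  simp only [id] at hdisj hcov
  have hu : u.Countable := hdisj.countable_of_nonempty_interior fun x hx =>
    ⟨x, ball_subset_interior_closedBall (mem_ball_self (hρ x (hut hx)).1)⟩
  have hCu : C ≤ᵐ[μ] ⋃ x ∈ u, C ∩ closedBall x (4 * ρ x) := by
    refine ae_le_set.2 (measure_mono_null ?_ hCt)
    rintro y ⟨hyC, hyu⟩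
    refine ⟨hyC, fun hyt => hyu ?_⟩
    obtain ⟨x, hx, hsub⟩ := hcov y hyt
    exact mem_biUnion hx ⟨hyC, hsub (mem_closedBall_self (hρ y hyt).1.le)⟩
  calc μ C ≤ μ (⋃ x ∈ u, C ∩ closedBall x (4 * ρ x)) := measure_mono_ae hCu
    _ ≤ ∑' x : u, μ (C ∩ closedBall x (4 * ρ x)) := measure_biUnion_le μ hu _
    _ ≤ ∑' x : u, K * μ (D ∩ ball x (ρ x)) := ENNReal.tsum_le_tsum fun x => hK x (hut x.2)
    _ = K * μ (⋃ x ∈ u, D ∩ ball x (ρ x)) := by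
      rw [ENNReal.tsum_mul_left, measure_biUnion hu
        (hdisj.mono fun x => inter_subset_right.trans ball_subset_closedBall)
        fun x _ => hD.inter measurableSet_ball]
    _ ≤ K * μ D := by gcongr; exact iUnion₂_subset fun _ _ => inter_subset_left

end Vitali

section AddHaar

variable {E : Type*} [NormedAddCommGroup E] [NormedSpace ℝ E] [FiniteDimensional ℝ E]
  [MeasurableSpace E] [BorelSpace E] (μ : Measure E) [μ.IsAddHaarMeasure]

theorem measure_inter_closedBall_le_inter_ball (s : Set E) (x : E) {ρ : ℝ} (hρ : ρ ≠ 0) :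
    μ (s ∩ closedBall x ρ) ≤ μ (s ∩ ball x ρ) := by
  refine measure_mono_ae <| ae_le_set.2 <|
    measure_mono_null ?_ (Measure.addHaar_sphere_of_ne_zero μ x hρ)
  rintro y ⟨⟨hys, hy⟩, hyn⟩
  rw [← closedBall_sdiff_ball]
  exact ⟨hy, fun hy' => hyn ⟨hys, hy'⟩⟩

theorem ofReal_mul_pow_mul_addHaar_ball (x : E) (ε : ℝ) {ρ τ : ℝ} (hε : 0 ≤ ε) (hτ : 0 < τ) :
    ENNReal.ofReal (ε * τ ^ finrank ℝ E) * μ (ball x ρ) =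
      ENNReal.ofReal ε * μ (ball x (τ * ρ)) := by
  rw [Measure.addHaar_ball_mul_of_pos μ x hτ, Measure.addHaar_ball_center μ x ρ,
    ENNReal.ofReal_mul hε, mul_assoc]

def denseRadii (C : Set E) (ε r : ℝ) (x : E) : Set ℝ :=
  {ρ | ρ ∈ Ioc 0 r ∧ ENNReal.ofReal ε * μ (ball x ρ) ≤ μ (C ∩ ball x ρ)}

theorem measure_diff_setOf_denseRadii_nonempty {C : Set E} (hC : MeasurableSet C) {ε r : ℝ}
    (hε : ε < 1) (hr : 0 < r) : μ (C \ {x | (denseRadii μ C ε r x).Nonempty}) = 0 := by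
  have h := (ae_restrict_iff' hC).1 (Besicovitch.ae_tendsto_measure_inter_div μ C)
  refine measure_mono_null ?_ (ae_iff.1 h)
  rintro x ⟨hxC, hx⟩ hlim
  refine hx ?_
  have hev : ∀ᶠ ρ in 𝓝[>] (0 : ℝ), ρ ∈ Ioc 0 r ∧
      ENNReal.ofReal ε < μ (C ∩ closedBall x ρ) / μ (closedBall x ρ) :=
    Eventually.and (Ioc_mem_nhdsGT hr)
      ((hlim hxC).eventually (eventually_gt_nhds (ENNReal.ofReal_lt_one.2 hε)))
  obtain ⟨ρ, hρ, hlt⟩ := hev.exists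
  refine ⟨ρ, hρ, ?_⟩
  rw [ENNReal.lt_div_iff_mul_lt (Or.inl (measure_closedBall_pos μ x hρ.1).ne')
    (Or.inl measure_closedBall_lt_top.ne)] at hlt
  calc ENNReal.ofReal ε * μ (ball x ρ) ≤ ENNReal.ofReal ε * μ (closedBall x ρ) := by
        gcongr; exact ball_subset_closedBall
    _ ≤ μ (C ∩ closedBall x ρ) := hlt.le
    _ ≤ μ (C ∩ ball x ρ) := measure_inter_closedBall_le_inter_ball μ C x hρ.1.ne'

theorem measure_inter_closedBall_le_of_mul_notMem_denseRadii {C : Set E} {ε r : ℝ} (hε : 0 ≤ ε)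
    (hr : 0 ≤ r) (hC : μ C < ENNReal.ofReal (ε * r ^ finrank ℝ E) * μ (ball 0 1))
    {x : E} {ρ τ : ℝ}
    (hρ : 0 < ρ) (hτ : 0 < τ) (hτρ : τ * ρ ∉ denseRadii μ C ε r x) :
    μ (C ∩ closedBall x (τ * ρ)) ≤ ENNReal.ofReal (ε * τ ^ finrank ℝ E) * μ (ball x ρ) := by
  have hτρ_pos : 0 < τ * ρ := mul_pos hτ hρ
  rw [ofReal_mul_pow_mul_addHaar_ball μ x ε hε hτ]
  refine (measure_inter_closedBall_le_inter_ball μ C x hτρ_pos.ne').trans ?_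
  by_cases hle : τ * ρ ≤ r
  · exact (not_le.1 fun h => hτρ ⟨⟨hτρ_pos, hle⟩, h⟩).le
  · calc μ (C ∩ ball x (τ * ρ)) ≤ μ C := measure_mono inter_subset_left
      _ ≤ ENNReal.ofReal (ε * (τ * ρ) ^ finrank ℝ E) * μ (ball 0 1) :=
        hC.le.trans (by gcongr; linarith)
      _ = ENNReal.ofReal ε * μ (ball x (τ * ρ)) := by
        rw [Measure.addHaar_ball_of_pos μ x hτρ_pos, ENNReal.ofReal_mul hε, mul_assoc]

theorem measure_le_of_forall_ball_inter_subset {A C D : Set E} (hC : MeasurableSet C)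
    (hD : MeasurableSet D) (hCD : C ⊆ D) (hDA : D ⊆ A) {c₁ r₁ r ε : ℝ} (hc₁ : 0 < c₁)
    (hA : ∀ x ∈ A, ∀ t : ℝ, 0 < t → t ≤ r₁ →
      ENNReal.ofReal c₁ * μ (ball x t) ≤ μ (ball x t ∩ A))
    (hr : 0 < r) (hrr₁ : r ≤ r₁) (hε : 0 ≤ ε) (hε1 : ε < 1)
    (hCr : μ C < ENNReal.ofReal (ε * r ^ finrank ℝ E) * μ (ball 0 1))
    (hball : ∀ x ∈ A, ∀ ρ : ℝ, 0 < ρ → ρ ≤ r →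
      ENNReal.ofReal ε * μ (ball x ρ) ≤ μ (C ∩ ball x ρ) → ball x ρ ∩ A ⊆ D) :
    μ C ≤ ENNReal.ofReal (4 ^ finrank ℝ E * ε / c₁) * μ D := by
  set t := C ∩ {x | (denseRadii μ C ε r x).Nonempty}
  have hstop : ∀ x ∈ t, ∃ ρ ∈ denseRadii μ C ε r x, 4 * ρ ∉ denseRadii μ C ε r x :=
    fun x hx => Real.exists_mem_mul_notMem hx.2 (fun ρ hρ => hρ.1.1) ⟨r, fun ρ hρ => hρ.1.2⟩
      (by norm_num)
  choose! ρ hρ hρ4 using hstop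
  refine measure_le_mul_of_forall_inter_closedBall_le μ hD (R := r) ?_ (fun x hx => (hρ x hx).1)
    fun x hx => ?_
  · rw [sdiff_self_inter]
    exact measure_diff_setOf_denseRadii_nonempty μ hC hε1 hr
  obtain ⟨⟨hρ0, hρr⟩, hdense⟩ := hρ x hx
  have hxA : x ∈ A := hDA (hCD hx.1)
  have hD_ball : μ (ball x (ρ x)) * ENNReal.ofReal c₁ ≤ μ (D ∩ ball x (ρ x)) := by
    rw [mul_comm]
    exact (hA x hxA _ hρ0 (hρr.trans hrr₁)).trans
      (measure_mono fun y hy => ⟨hball x hxA _ hρ0 hρr hdense hy, hy.1⟩)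
  calc μ (C ∩ closedBall x (4 * ρ x))
      ≤ ENNReal.ofReal (ε * 4 ^ finrank ℝ E) * μ (ball x (ρ x)) :=
        measure_inter_closedBall_le_of_mul_notMem_denseRadii μ hε hr.le hCr hρ0 four_pos
          (hρ4 x hx)
    _ ≤ ENNReal.ofReal (ε * 4 ^ finrank ℝ E) * (μ (D ∩ ball x (ρ x)) / ENNReal.ofReal c₁) := by
        gcongr
        exact (ENNReal.le_div_iff_mul_le (Or.inl (by positivity)) (Or.inl ENNReal.ofReal_ne_top)).2
          hD_ball
    _ = ENNReal.ofReal (4 ^ finrank ℝ E * ε / c₁) * μ (D ∩ ball x (ρ x)) := by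
        rw [ENNReal.ofReal_div_of_pos hc₁, mul_comm ε, div_eq_mul_inv, div_eq_mul_inv]
        ring

end AddHaar

/-- Calderón–Zygmund–Krylov–Safonov type covering lemma: under a uniform measure
density condition on `A`, if `C ⊂ D ⊂ A` satisfy the two conditions (i), (ii) with
parameter `ε`, then `|C| ≤ C(n) ε / c₁ |D|`. -/
theorem covering_lemma (n : ℕ) :
    ∃ Cn : ℝ, 0 < Cn ∧
      ∀ (A C D : Set (Fin n → ℝ)), MeasurableSet A → MeasurableSet C → MeasurableSet D →
        C ⊆ D → D ⊆ A →
        ∀ (c₁ r₁ : ℝ), 0 < c₁ → 0 < r₁ →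
          (∀ x ∈ A, ∀ t : ℝ, 0 < t → t ≤ r₁ →
            ENNReal.ofReal c₁ * volume (ball x t) ≤ volume (ball x t ∩ A)) →
          ∀ (r ε : ℝ), 0 < r → r ≤ r₁ → 0 < ε → ε < 1 →
            volume C < ENNReal.ofReal (ε * r ^ n) * volume (ball (0 : Fin n → ℝ) 1) →
            (∀ x ∈ A, ∀ ρ : ℝ, 0 < ρ → ρ ≤ r →
              ENNReal.ofReal ε * volume (ball x ρ) ≤ volume (C ∩ ball x ρ) →
                ball x ρ ∩ A ⊆ D) →
            volume C ≤ ENNReal.ofReal (Cn * ε / c₁) * volume D := by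
  have hdim : finrank ℝ (Fin n → ℝ) = n := finrank_fin_fun ℝ
  refine ⟨4 ^ n, by positivity, fun A C D _ hC hD hCD hDA c₁ r₁ hc₁ _ hA r ε hr hrr₁ hε hε1 hCr
    hball => ?_⟩
  simpa only [hdim] using measure_le_of_forall_ball_inter_subset volume hC hD hCD hDA hc₁ hA hr
    hrr₁ hε.le hε1 (by rwa [hdim]) hball
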